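/- arXiv:1805.07617 — 4 statements merged into one kernel-verified Lean document; each statement's English description precedes it below -/
import Mathlib

section
/- Let H be a complex Hilbert space, D and A bounded self-adjoint operators on H, and let φ : ℝ → ℂ be given by φ(x) = (1/2π) ∫_ℝ φ̂(s) e^{isx} ds for an integrable function φ̂ with ∫_ℝ |s·φ̂(s)| ds < ∞. Then the commutator [φ(D), A] (where φ(D) = (1/2π)∫ φ̂(s) e^{isD} ds) satisfies the norm bound ‖[φ(D), A]‖ ≤ (1/2π) (∫_ℝ |s φ̂(s)| ds) · ‖[D, A]‖. -/
/-!
For self-adjoint `D` the operators `e^{itD}` are unitary, and the path `t ↦ e^{itD} A e^{-itD}`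
has derivative `e^{itD} [iD, A] e^{-itD}` of norm `‖[D, A]‖`. The mean value inequality therefore
gives `‖[e^{isD}, A]‖ ≤ |s| ‖[D, A]‖`, and integrating this against `φ̂` gives the bound.
-/

open NormedSpace MeasureTheory

lemma norm_integral_mul_sub_mul_integral_le {X R : Type*} [MeasurableSpace X] {μ : Measure X}
    [NormedRing R] [NormedSpace ℝ R] [IsScalarTower ℝ R R] [SMulCommClass ℝ R R]
    {f : X → R} (hf : Integrable f μ) (b : R) {g : X → ℝ} (hg : Integrable g μ)
    (hfg : ∀ x, ‖f x * b - b * f x‖ ≤ g x) :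
    ‖(∫ x, f x ∂μ) * b - b * ∫ x, f x ∂μ‖ ≤ ∫ x, g x ∂μ := by
  rw [← integral_mul_const_of_integrable hf, ← integral_const_mul_of_integrable hf,
    ← integral_sub (hf.mul_const b) (hf.const_mul b)]
  exact norm_integral_le_of_norm_le hg (ae_of_all _ hfg)

section BanachAlgebra

variable {A : Type*} [NormedRing A] [NormedAlgebra ℝ A] [CompleteSpace A]

lemma exp_neg_smul_mul_exp_smul (x : A) (t : ℝ) : exp ((-t) • x) * exp (t • x) = 1 := by
  let _ : NormedAlgebra ℚ A := .restrictScalars ℚ ℝ A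
  rw [← exp_add_of_commute ((Commute.refl x).smul_left _ |>.smul_right _), ← add_smul,
    neg_add_cancel, zero_smul, exp_zero]

lemma hasDerivAt_exp_smul_mul_mul_exp_neg_smul (x b : A) (t : ℝ) :
    HasDerivAt (fun u : ℝ => exp (u • x) * b * exp ((-u) • x))
      (exp (t • x) * (x * b - b * x) * exp ((-t) • x)) t := by
  let _ : NormedAlgebra ℚ A := .restrictScalars ℚ ℝ A
  have hneg : HasDerivAt (fun u : ℝ => exp ((-u) • x)) (-(x * exp ((-t) • x))) t := by
    simpa [Function.comp_def] using
      (hasDerivAt_exp_smul_const' (𝕂 := ℝ) x (-t)).scomp t (hasDerivAt_neg t)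
  refine (((hasDerivAt_exp_smul_const' (𝕂 := ℝ) x t).mul_const b).mul hneg).congr_deriv ?_
  rw [(((Commute.refl x).smul_right t).exp_right).eq]
  noncomm_ring

end BanachAlgebra

section CStarAlgebra

variable {A : Type*} [CStarAlgebra A]

lemma norm_le_one_of_mem_unitary {u : A} (hu : u ∈ unitary A) : ‖u‖ ≤ 1 := by
  nontriviality A
  exact (CStarRing.norm_of_mem_unitary hu).le

lemma exp_smul_I_smul_mem_unitary {a : A} (ha : IsSelfAdjoint a) (t : ℝ) :
    exp (t • Complex.I • a) ∈ unitary A := by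
  let _ : NormedAlgebra ℚ A := .restrictScalars ℚ ℂ A
  rw [smul_comm]
  exact exp_mem_unitary_of_mem_skewAdjoint
    (((IsSelfAdjoint.all t).smul ha).smul_mem_skewAdjoint Complex.conj_I)

lemma I_mul_ofReal_smul (a : A) (t : ℝ) : (Complex.I * t) • a = t • Complex.I • a := by
  rw [mul_comm, mul_smul, Complex.coe_smul]

lemma norm_exp_smul_I_smul_conj_sub_le {a : A} (ha : IsSelfAdjoint a) (b : A) (s : ℝ) :
    ‖exp (s • Complex.I • a) * b * exp ((-s) • Complex.I • a) - b‖ ≤ |s| * ‖a * b - b * a‖ := by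
  have hbound : ∀ t : ℝ, ‖exp (t • Complex.I • a) * (Complex.I • a * b - b * Complex.I • a) *
      exp ((-t) • Complex.I • a)‖ ≤ ‖a * b - b * a‖ := fun t => by
    rw [CStarRing.norm_mul_mem_unitary _ (exp_smul_I_smul_mem_unitary ha (-t)),
      CStarRing.norm_mem_unitary_mul _ (exp_smul_I_smul_mem_unitary ha t), smul_mul_assoc,
      mul_smul_comm, ← smul_sub, norm_smul, Complex.norm_I, one_mul]
  have := Convex.norm_image_sub_le_of_norm_hasDerivWithin_le
    (fun t _ => (hasDerivAt_exp_smul_mul_mul_exp_neg_smul (Complex.I • a) b t).hasDerivWithinAt)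
    (fun t _ => hbound t) convex_univ (Set.mem_univ 0) (Set.mem_univ s)
  simpa [mul_comm] using this

lemma norm_exp_I_mul_smul_commutator_le {a : A} (ha : IsSelfAdjoint a) (b : A) (s : ℝ) :
    ‖exp ((Complex.I * s) • a) * b - b * exp ((Complex.I * s) • a)‖ ≤ |s| * ‖a * b - b * a‖ := by
  have hfactor : exp (s • Complex.I • a) * b - b * exp (s • Complex.I • a) =
      (exp (s • Complex.I • a) * b * exp ((-s) • Complex.I • a) - b) *
        exp (s • Complex.I • a) := by
    rw [sub_mul, mul_assoc _ (exp _), exp_neg_smul_mul_exp_smul, mul_one]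
  rw [I_mul_ofReal_smul, hfactor,
    CStarRing.norm_mul_mem_unitary _ (exp_smul_I_smul_mem_unitary ha s)]
  exact norm_exp_smul_I_smul_conj_sub_le ha b s

lemma norm_integral_exp_I_mul_smul_commutator_le {a : A} (ha : IsSelfAdjoint a) (b : A)
    {φ : ℝ → ℂ} (hφ : Integrable φ) (hsφ : Integrable fun s : ℝ => |s| * ‖φ s‖) :
    ‖(∫ s : ℝ, φ s • exp ((Complex.I * s) • a)) * b -
        b * ∫ s : ℝ, φ s • exp ((Complex.I * s) • a)‖ ≤
      (∫ s : ℝ, |s| * ‖φ s‖) * ‖a * b - b * a‖ := by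
  let _ : NormedAlgebra ℚ A := .restrictScalars ℚ ℂ A
  rw [← integral_mul_const]
  refine norm_integral_mul_sub_mul_integral_le ?_ b (hsφ.mul_const _) fun s => ?_
  · refine hφ.smul_bdd 1 (by fun_prop) (ae_of_all _ fun s => norm_le_one_of_mem_unitary ?_)
    simpa only [I_mul_ofReal_smul] using exp_smul_I_smul_mem_unitary ha s
  · rw [smul_mul_assoc, mul_smul_comm, ← smul_sub, norm_smul, mul_comm |s|, mul_assoc]
    exact mul_le_mul_of_nonneg_left (norm_exp_I_mul_smul_commutator_le ha b s) (norm_nonneg _)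

end CStarAlgebra

theorem norm_commutator_smooth_function_le_general {H : Type*} [NormedAddCommGroup H]
    [InnerProductSpace ℂ H] [CompleteSpace H]
    (D A : H →L[ℂ] H) (hD : IsSelfAdjoint D)
    (φhat : ℝ → ℂ) (h1 : Integrable φhat)
    (h2 : Integrable (fun s : ℝ => |s| * ‖φhat s‖)) :
    ‖((2 * Real.pi)⁻¹ • ∫ s : ℝ, φhat s • exp ((Complex.I * s) • D)) * A -
        A * ((2 * Real.pi)⁻¹ • ∫ s : ℝ, φhat s • exp ((Complex.I * s) • D))‖ ≤
      (2 * Real.pi)⁻¹ * (∫ s : ℝ, |s| * ‖φhat s‖) * ‖D * A - A * D‖ := by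
  have hc : (0 : ℝ) ≤ (2 * Real.pi)⁻¹ := by positivity
  rw [smul_mul_assoc, mul_smul_comm, ← smul_sub, norm_smul, Real.norm_of_nonneg hc, mul_assoc]
  exact mul_le_mul_of_nonneg_left (norm_integral_exp_I_mul_smul_commutator_le hD A h1 h2) hc

/-- with `φ(D) = (1/2π)∫ φ̂(s) e^{isD} ds`, one has
`‖[φ(D), A]‖ ≤ (1/2π)(∫ |s φ̂(s)| ds) ‖[D, A]‖`. -/
theorem norm_commutator_smooth_function_le {H : Type*} [NormedAddCommGroup H]
    [InnerProductSpace ℂ H] [CompleteSpace H]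
    (D A : H →L[ℂ] H) (hD : IsSelfAdjoint D) (hA : IsSelfAdjoint A)
    (φhat : ℝ → ℂ) (h1 : Integrable φhat)
    (h2 : Integrable (fun s : ℝ => |s| * ‖φhat s‖)) :
    ‖((2 * Real.pi)⁻¹ • ∫ s : ℝ, φhat s • exp ((Complex.I * s) • D)) * A -
        A * ((2 * Real.pi)⁻¹ • ∫ s : ℝ, φhat s • exp ((Complex.I * s) • D))‖ ≤
      (2 * Real.pi)⁻¹ * (∫ s : ℝ, |s| * ‖φhat s‖) * ‖D * A - A * D‖ :=
  norm_commutator_smooth_function_le_general D A hD φhat h1 h2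
end

section
/- Let φ(x) = (2/√π) ∫₀ˣ e^{−s²} ds be the error function. Then the function ψ : ℝ → ℂ defined by ψ(x) = 1 − exp(π i (φ(x) + 1)) is a Schwartz function: for all j, k ∈ ℕ, x^k ψ^{(j)}(x) is bounded on ℝ. -/
/-!
The phase `E(x) = exp(πi(φ(x) + 1))` is unimodular with `E' = 2√π i e^{-x²} E`. Hence `ψ' = -E'`,
and by induction every derivative `ψ^{(j)}`, `j ≥ 1`, is a finite sum of terms
`b xᵐ e^{-(n+1)x²} E(x)`, each of which decays rapidly. For `ψ` itself, `exp(2πi) = 1` and the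
oddness of `φ` give `|ψ(x)| ≤ π (1 - φ(|x|))`, and `1 - φ(y) ≤ e^{-y²}` for `y ≥ 0` because
`s² ≥ y² + (s - y)²` for `s ≥ y`, so the Gaussian tail beyond `y` is at most
`e^{-y²} ∫₀^∞ e^{-t²} = e^{-y²} √π / 2`.
-/

/-- The error function `φ(x) = (2/√π) ∫₀ˣ e^{−s²} ds`. -/
noncomputable def erfFun (x : ℝ) : ℝ :=
  (2 / Real.sqrt Real.pi) * ∫ s in (0 : ℝ)..x, Real.exp (-s ^ 2)

/-- `ψ(x) = 1 − exp(πi(φ(x)+1))` for the error function `φ`. -/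
noncomputable def psiFun (x : ℝ) : ℂ :=
  1 - Complex.exp (Real.pi * Complex.I * ((erfFun x : ℂ) + 1))

open Real MeasureTheory Set

def RapidDecay {F : Type*} [Norm F] (f : ℝ → F) : Prop :=
  ∀ k : ℕ, ∃ C : ℝ, ∀ x, |x| ^ k * ‖f x‖ ≤ C

namespace RapidDecay

variable {F G : Type*} [Norm F] [SeminormedAddGroup G]

theorem of_norm_le {f : ℝ → F} {g : ℝ → G} (hg : RapidDecay g) (c : ℝ)
    (hfg : ∀ x, ‖f x‖ ≤ c * ‖g x‖) : RapidDecay f := by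
  intro k
  obtain ⟨C, hC⟩ := hg k
  refine ⟨|c| * C, fun x => ?_⟩
  calc |x| ^ k * ‖f x‖ ≤ |x| ^ k * (|c| * ‖g x‖) := by
        gcongr
        exact (hfg x).trans (by gcongr; exact le_abs_self c)
    _ = |c| * (|x| ^ k * ‖g x‖) := by ring
    _ ≤ |c| * C := by gcongr; exact hC x

theorem add {f g : ℝ → G} (hf : RapidDecay f) (hg : RapidDecay g) :
    RapidDecay fun x => f x + g x := by
  intro k
  obtain ⟨C₁, hC₁⟩ := hf k
  obtain ⟨C₂, hC₂⟩ := hg k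
  refine ⟨C₁ + C₂, fun x => ?_⟩
  calc |x| ^ k * ‖f x + g x‖ ≤ |x| ^ k * ‖f x‖ + |x| ^ k * ‖g x‖ := by
        rw [← mul_add]; gcongr; exact norm_add_le _ _
    _ ≤ C₁ + C₂ := add_le_add (hC₁ x) (hC₂ x)

end RapidDecay

theorem abs_pow_mul_exp_neg_sq_le (k : ℕ) (x : ℝ) :
    |x| ^ k * exp (-x ^ 2) ≤ k.factorial * exp 4⁻¹ := by
  have hpow : |x| ^ k ≤ k.factorial * exp |x| := by
    have := pow_div_factorial_le_exp |x| (abs_nonneg x) k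
    rwa [div_le_iff₀ (by positivity), mul_comm] at this
  have hexp : exp |x| * exp (-x ^ 2) ≤ exp 4⁻¹ := by
    rw [← exp_add, exp_le_exp]
    nlinarith [sq_nonneg (|x| - 2⁻¹), sq_abs x]
  calc |x| ^ k * exp (-x ^ 2) ≤ k.factorial * exp |x| * exp (-x ^ 2) := by gcongr
    _ ≤ k.factorial * exp 4⁻¹ := by rw [mul_assoc]; gcongr

theorem rapidDecay_pow_mul_exp_neg_sq (m : ℕ) : RapidDecay fun x : ℝ => x ^ m * exp (-x ^ 2) :=
  fun k => ⟨(k + m).factorial * exp 4⁻¹, fun x => by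
    rw [norm_mul, norm_pow, Real.norm_eq_abs, Real.norm_of_nonneg (exp_pos _).le, ← mul_assoc,
      ← pow_add]
    exact abs_pow_mul_exp_neg_sq_le (k + m) x⟩

theorem hasDerivAt_erfFun (x : ℝ) : HasDerivAt erfFun (2 / √π * exp (-x ^ 2)) x := by
  have hcont : Continuous fun s : ℝ => exp (-s ^ 2) := by fun_prop
  exact (intervalIntegral.integral_hasDerivAt_right (hcont.intervalIntegrable _ _)
    hcont.aestronglyMeasurable.stronglyMeasurableAtFilter hcont.continuousAt).const_mul _

theorem erfFun_neg (x : ℝ) : erfFun (-x) = -erfFun x := by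
  have heven := intervalIntegral.integral_comp_neg (a := 0) (b := x) fun s => exp (-s ^ 2)
  simp only [neg_sq, neg_zero] at heven
  rw [erfFun, erfFun, heven, intervalIntegral.integral_symm, mul_neg]

theorem integral_Ioi_comp_add_right {E : Type*} [NormedAddCommGroup E] [NormedSpace ℝ E]
    (f : ℝ → E) (y : ℝ) : ∫ t in Ioi 0, f (t + y) = ∫ s in Ioi y, f s := by
  have := (measurePreserving_add_right volume y).setIntegral_preimage_emb
    (measurableEmbedding_addRight y) f (Ioi y)
  rwa [preimage_add_const_Ioi, sub_self] at this

theorem integrable_exp_neg_sq : Integrable fun s : ℝ => exp (-s ^ 2) := by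
  simpa using integrable_exp_neg_mul_sq one_pos

theorem integral_Ioi_exp_neg_sq : ∫ s in Ioi (0 : ℝ), exp (-s ^ 2) = √π / 2 := by
  simpa using integral_gaussian_Ioi 1

theorem one_sub_erfFun_eq {y : ℝ} (hy : 0 ≤ y) :
    1 - erfFun y = 2 / √π * ∫ s in Ioi y, exp (-s ^ 2) := by
  have hsplit := setIntegral_union (Ioc_disjoint_Ioi (le_refl y) (a := 0)) measurableSet_Ioi
    integrable_exp_neg_sq.integrableOn integrable_exp_neg_sq.integrableOn
  rw [Ioc_union_Ioi_eq_Ioi hy, integral_Ioi_exp_neg_sq] at hsplit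
  have hπ : √π ≠ 0 := by positivity
  rw [erfFun, intervalIntegral.integral_of_le hy]
  field_simp
  linarith

theorem integral_Ioi_exp_neg_sq_le {y : ℝ} (hy : 0 ≤ y) :
    ∫ s in Ioi y, exp (-s ^ 2) ≤ exp (-y ^ 2) * (√π / 2) := by
  rw [← integral_Ioi_comp_add_right, ← integral_Ioi_exp_neg_sq, ← integral_const_mul]
  refine setIntegral_mono_on ?_ (integrable_exp_neg_sq.integrableOn.const_mul _)
    measurableSet_Ioi fun t ht => ?_
  · exact (integrable_exp_neg_sq.comp_add_right y).integrableOn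
  · rw [← exp_add, exp_le_exp]
    nlinarith [mem_Ioi.1 ht]

theorem abs_one_sub_erfFun_le {y : ℝ} (hy : 0 ≤ y) : |1 - erfFun y| ≤ exp (-y ^ 2) := by
  have hπ : 0 < √π := by positivity
  have htail := integral_Ioi_exp_neg_sq_le hy
  have hnonneg : 0 ≤ ∫ s in Ioi y, exp (-s ^ 2) :=
    setIntegral_nonneg measurableSet_Ioi fun s _ => (exp_pos _).le
  rw [one_sub_erfFun_eq hy, abs_of_nonneg (by positivity)]
  calc 2 / √π * ∫ s in Ioi y, exp (-s ^ 2) ≤ 2 / √π * (exp (-y ^ 2) * (√π / 2)) := by gcongr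
    _ = exp (-y ^ 2) := by field_simp

theorem norm_psiFun_le (x : ℝ) : ‖psiFun x‖ ≤ π * |1 - erfFun (|x|)| := by
  have hbound (θ : ℝ) : ‖1 - Complex.exp (Complex.I * θ)‖ ≤ |θ| := by
    rw [norm_sub_rev]; exact norm_exp_I_mul_ofReal_sub_one_le
  have hπ : π * |1 - erfFun (|x|)| = |π * (1 - erfFun (|x|))| := by
    rw [abs_mul, abs_of_pos pi_pos]
  rcases le_total 0 x with hx | hx
  · have hphase : psiFun x = 1 - Complex.exp (Complex.I * ((-(π * (1 - erfFun |x|)) : ℝ))) := by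
      rw [psiFun, abs_of_nonneg hx, show (π : ℂ) * Complex.I * (erfFun x + 1) =
        Complex.I * ((-(π * (1 - erfFun x)) : ℝ)) + 2 * π * Complex.I by push_cast; ring,
        Complex.exp_add, Complex.exp_two_pi_mul_I, mul_one]
    rw [hphase, hπ]
    exact (hbound _).trans (abs_neg _).le
  · have hphase : psiFun x = 1 - Complex.exp (Complex.I * ((π * (1 - erfFun |x|) : ℝ))) := by
      rw [psiFun, abs_of_nonpos hx, erfFun_neg]
      push_cast; ring_nf
    rw [hphase, hπ]
    exact hbound _

theorem rapidDecay_psiFun : RapidDecay psiFun := by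
  refine (rapidDecay_pow_mul_exp_neg_sq 0).of_norm_le π fun x => ?_
  rw [pow_zero, one_mul, Real.norm_of_nonneg (exp_pos _).le, ← sq_abs]
  exact (norm_psiFun_le x).trans (by gcongr; exact abs_one_sub_erfFun_le (abs_nonneg x))

noncomputable def erfPhase (x : ℝ) : ℂ :=
  Complex.exp (π * Complex.I * ((erfFun x : ℂ) + 1))

theorem norm_erfPhase (x : ℝ) : ‖erfPhase x‖ = 1 := by
  rw [erfPhase, Complex.norm_exp]
  simp

theorem hasDerivAt_erfPhase (x : ℝ) :
    HasDerivAt erfPhase (π * Complex.I * (2 / √π : ℝ) * (exp (-x ^ 2) : ℝ) * erfPhase x) x := by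
  have := ((((hasDerivAt_erfFun x).ofReal_comp).add_const 1).const_mul
    ((π : ℂ) * Complex.I)).cexp
  refine this.congr_deriv ?_
  rw [erfPhase]; push_cast; ring

theorem hasDerivAt_psiFun (x : ℝ) :
    HasDerivAt psiFun (-(π * Complex.I * (2 / √π : ℝ)) * (exp (-x ^ 2) : ℝ) * erfPhase x) x :=
  ((hasDerivAt_erfPhase x).const_sub 1).congr_deriv (by ring)

theorem hasDerivAt_pow_mul_exp_neg_sq_pow (m n : ℕ) (x : ℝ) :
    HasDerivAt (fun x => x ^ m * exp (-x ^ 2) ^ (n + 1))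
      (m * (x ^ (m - 1) * exp (-x ^ 2) ^ (n + 1))
        - 2 * (n + 1) * (x ^ (m + 1) * exp (-x ^ 2) ^ (n + 1))) x := by
  have hg : HasDerivAt (fun x => exp (-x ^ 2)) (-(2 * x) * exp (-x ^ 2)) x := by
    simpa [mul_comm] using ((hasDerivAt_pow 2 x).neg).exp
  refine ((hasDerivAt_pow m x).mul (hg.fun_pow (n + 1))).congr_deriv ?_
  push_cast
  ring

inductive GaussModulated (E : ℝ → ℂ) : (ℝ → ℂ) → Prop
  | monomial (b : ℂ) (m n : ℕ) :
      GaussModulated E fun x => b * ((x ^ m * exp (-x ^ 2) ^ (n + 1) : ℝ) : ℂ) * E x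
  | add {f g : ℝ → ℂ} :
      GaussModulated E f → GaussModulated E g → GaussModulated E fun x => f x + g x

namespace GaussModulated

variable {E f : ℝ → ℂ}

theorem exists_hasDerivAt {a : ℂ} (hE : ∀ x, HasDerivAt E (a * (exp (-x ^ 2) : ℝ) * E x) x)
    (hf : GaussModulated E f) : ∃ f', GaussModulated E f' ∧ ∀ x, HasDerivAt f (f' x) x := by
  induction hf with
  | monomial b m n =>
    refine ⟨_, .add (.monomial (b * m) (m - 1) n) (.add (.monomial (-2 * (n + 1) * b) (m + 1) n)
      (.monomial (b * a) m (n + 1))), fun x => ?_⟩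
    refine ((((hasDerivAt_pow_mul_exp_neg_sq_pow m n x).ofReal_comp).const_mul b).mul
      (hE x)).congr_deriv ?_
    push_cast
    ring
  | add _ _ ihf ihg =>
    obtain ⟨f', hf', hdf⟩ := ihf
    obtain ⟨g', hg', hdg⟩ := ihg
    exact ⟨_, hf'.add hg', fun x => (hdf x).add (hdg x)⟩

theorem iteratedDeriv {a : ℂ} (hE : ∀ x, HasDerivAt E (a * (exp (-x ^ 2) : ℝ) * E x) x)
    (hf : GaussModulated E f) (j : ℕ) : GaussModulated E (iteratedDeriv j f) := by
  induction j with
  | zero => simpa using hf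
  | succ j ih =>
    obtain ⟨f', hf', hderiv⟩ := ih.exists_hasDerivAt hE
    rwa [iteratedDeriv_succ, funext fun x => (hderiv x).deriv]

theorem rapidDecay {M : ℝ} (hE : ∀ x, ‖E x‖ ≤ M) (hf : GaussModulated E f) : RapidDecay f := by
  induction hf with
  | monomial b m n =>
    refine (rapidDecay_pow_mul_exp_neg_sq m).of_norm_le (‖b‖ * M) fun x => ?_
    have hg : exp (-x ^ 2) ^ (n + 1) ≤ exp (-x ^ 2) :=
      pow_le_of_le_one (exp_pos _).le (exp_le_one_iff.2 (by nlinarith)) n.succ_ne_zero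
    simp only [norm_mul, Complex.norm_real, norm_pow, Real.norm_eq_abs,
      abs_of_pos (exp_pos _)]
    calc ‖b‖ * (|x| ^ m * exp (-x ^ 2) ^ (n + 1)) * ‖E x‖
        ≤ ‖b‖ * (|x| ^ m * exp (-x ^ 2)) * M := by gcongr; exact hE x
      _ = ‖b‖ * M * (|x| ^ m * exp (-x ^ 2)) := by ring
  | add _ _ ihf ihg => exact ihf.add ihg

end GaussModulated

theorem gaussModulated_deriv_psiFun : GaussModulated erfPhase (deriv psiFun) := by
  convert GaussModulated.monomial (-(π * Complex.I * (2 / √π : ℝ))) 0 0 using 1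
  funext x
  rw [(hasDerivAt_psiFun x).deriv]
  push_cast
  ring

/-- `ψ` is a Schwartz function: `x^k ψ^{(j)}(x)` is bounded for all `j, k`. -/
theorem psi_schwartz :
    ∀ j k : ℕ, ∃ C : ℝ, ∀ x : ℝ, |x| ^ k * ‖iteratedDeriv j psiFun x‖ ≤ C := by
  rintro (_ | j)
  · rw [iteratedDeriv_zero]
    exact rapidDecay_psiFun
  · rw [iteratedDeriv_succ']
    exact ((gaussModulated_deriv_psiFun.iteratedDeriv hasDerivAt_erfPhase j).rapidDecay
      fun x => (norm_erfPhase x).le)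
end

section
/- Let A be a complex unital Banach algebra with a continuous trace τ : A → ℂ (a continuous linear map with τ(xy) = τ(yx)). Let a : ℝ → A be a continuously differentiable path and set u(t) = exp(2πi a(t)). Then τ(u'(t) u(t)^{−1}) = 2πi τ(a'(t)) for all t. -/
/-!
Write `D x = fderiv exp x` and `φ x = τ (D x h * exp (-x))`. Differentiating
`exp x = exp (x/2) * exp (x/2)` by the Leibniz rule and moving the outer factors around with the
trace property gives `φ x = φ (x/2)`. Since `φ` is continuous, `φ x = φ 0 = τ h`, because
`D 0 = id`. The theorem is the chain rule applied to `r ↦ exp (2πi a r)`.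
-/

open NormedSpace Filter Topology

theorem exp_mul_exp_neg {A : Type*} [NormedRing A] [NormedAlgebra ℚ A] [CompleteSpace A] (x : A) :
    exp x * exp (-x) = 1 := by
  rw [← exp_add_of_commute (Commute.refl x).neg_right, add_neg_cancel, exp_zero]

section
variable {𝕂 A : Type*} [RCLike 𝕂] [NormedRing A] [NormedAlgebra 𝕂 A] [CompleteSpace A]

theorem exp_half_mul_exp_half (x : A) :
    exp ((2 : 𝕂)⁻¹ • x) * exp ((2 : 𝕂)⁻¹ • x) = exp x := by
  let : NormedAlgebra ℚ A := NormedAlgebra.restrictScalars ℚ 𝕂 A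
  rw [← exp_add_of_commute (Commute.refl _), ← add_smul, ← two_mul, mul_inv_cancel₀ two_ne_zero,
    one_smul]

theorem continuous_fderiv_exp : Continuous (fderiv 𝕂 (exp : A → A)) :=
  continuousOn_univ.mp
    (show AnalyticOnNhd 𝕂 (exp : A → A) Set.univ from fun x _ => exp_analytic x).fderiv.continuousOn

theorem fderiv_exp_apply_eq_halves (x h : A) :
    fderiv 𝕂 exp x h =
      fderiv 𝕂 exp ((2 : 𝕂)⁻¹ • x) ((2 : 𝕂)⁻¹ • h) * exp ((2 : 𝕂)⁻¹ • x) +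
        exp ((2 : 𝕂)⁻¹ • x) * fderiv 𝕂 exp ((2 : 𝕂)⁻¹ • x) ((2 : 𝕂)⁻¹ • h) := by
  have hscale : HasFDerivAt (fun y : A => (2 : 𝕂)⁻¹ • y)
      ((2 : 𝕂)⁻¹ • ContinuousLinearMap.id 𝕂 A) x :=
    ((2 : 𝕂)⁻¹ • ContinuousLinearMap.id 𝕂 A).hasFDerivAt
  have hhalf := (exp_analytic ((2 : 𝕂)⁻¹ • x)).differentiableAt.hasFDerivAt.comp x hscale
  have hsq := hhalf.mul' hhalf
  rw [show ((exp ∘ fun y : A => (2 : 𝕂)⁻¹ • y) * (exp ∘ fun y => (2 : 𝕂)⁻¹ • y)) = exp from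
    funext exp_half_mul_exp_half] at hsq
  rw [hsq.fderiv]
  simp [add_comm]
end

theorem eq_of_forall_eq_smul_half {𝕂 E X : Type*} [RCLike 𝕂] [NormedAddCommGroup E]
    [NormedSpace 𝕂 E] [TopologicalSpace X] [T2Space X] {g : E → X} (hg : Continuous g)
    (hhalf : ∀ x, g x = g ((2 : 𝕂)⁻¹ • x)) (x : E) : g x = g 0 := by
  have hpow : ∀ n : ℕ, g x = g (((2 : 𝕂)⁻¹) ^ n • x) := by
    intro n
    induction n with
    | zero => simp
    | succ n ih => rw [ih, hhalf, smul_smul, pow_succ']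
  have hlim : Tendsto (fun n : ℕ => ((2 : 𝕂)⁻¹) ^ n • x) atTop (𝓝 0) := by
    simpa using (tendsto_pow_atTop_nhds_zero_of_norm_lt_one
      (show ‖(2 : 𝕂)⁻¹‖ < 1 by norm_num)).smul_const x
  exact tendsto_nhds_unique (tendsto_const_nhds.congr hpow) ((hg.tendsto 0).comp hlim)

section
variable {𝕂 A F : Type*} [RCLike 𝕂] [NormedRing A] [NormedAlgebra 𝕂 A] [CompleteSpace A]
  [NormedAddCommGroup F] [NormedSpace 𝕂 F] (τ : A →L[𝕂] F) (hτ : ∀ x y : A, τ (x * y) = τ (y * x))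
include hτ

theorem trace_fderiv_exp_mul_exp_neg_eq_halves (x h : A) :
    τ (fderiv 𝕂 exp x h * exp (-x)) =
      τ (fderiv 𝕂 exp ((2 : 𝕂)⁻¹ • x) h * exp (-((2 : 𝕂)⁻¹ • x))) := by
  let : NormedAlgebra ℚ A := NormedAlgebra.restrictScalars ℚ 𝕂 A
  have leibniz_conj : ∀ d e e' : A, e * e' = 1 → e' * e = 1 →
      τ ((d * e + e * d) * (e' * e')) = (2 : 𝕂) • τ (d * e') := by
    intro d e e' hee' he'e
    calc τ ((d * e + e * d) * (e' * e'))
        = τ (d * (e * e') * e') + τ (e * (d * e' * e')) := by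
          rw [add_mul, map_add]; simp only [mul_assoc]
      _ = τ (d * e') + τ (d * e' * (e' * e)) := by
          rw [hτ e, hee', mul_one, ← mul_assoc]
      _ = (2 : 𝕂) • τ (d * e') := by rw [he'e, mul_one, two_smul]
  rw [fderiv_exp_apply_eq_halves, ← exp_half_mul_exp_half (𝕂 := 𝕂) (-x), smul_neg,
    leibniz_conj _ _ _ (exp_mul_exp_neg _) (by simpa using exp_mul_exp_neg (-((2 : 𝕂)⁻¹ • x))),
    ← map_smul, ← smul_mul_assoc, ← map_smul, smul_inv_smul₀ two_ne_zero]

theorem trace_fderiv_exp_mul_exp_neg (x h : A) : τ (fderiv 𝕂 exp x h * exp (-x)) = τ h := by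
  let : NormedAlgebra ℚ A := NormedAlgebra.restrictScalars ℚ 𝕂 A
  have hcont : Continuous fun y : A => τ (fderiv 𝕂 exp y h * exp (-y)) :=
    τ.continuous.comp <| (continuous_fderiv_exp.clm_apply continuous_const).mul <|
      exp_continuous.comp continuous_neg
  simpa [hasFDerivAt_exp_zero.fderiv] using
    eq_of_forall_eq_smul_half hcont (trace_fderiv_exp_mul_exp_neg_eq_halves τ hτ · h) x

theorem trace_deriv_exp_comp_mul_exp_neg {b : 𝕂 → A} {b' : A} {t : 𝕂} (hb : HasDerivAt b b' t) :
    τ (deriv (fun r => exp (b r)) t * exp (-b t)) = τ b' := by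
  have hderiv : HasDerivAt (fun r => exp (b r)) (fderiv 𝕂 exp (b t) b') t :=
    (exp_analytic (b t)).differentiableAt.hasFDerivAt.comp_hasDerivAt t hb
  rw [hderiv.deriv, trace_fderiv_exp_mul_exp_neg τ hτ]
end

theorem trace_log_deriv_exp_general {A : Type*} [NormedRing A] [NormedAlgebra ℂ A]
    [CompleteSpace A] (τ : A →L[ℂ] ℂ) (hτ : ∀ x y : A, τ (x * y) = τ (y * x))
    (a a' : ℝ → A) (hd : ∀ t, HasDerivAt a (a' t) t) (t : ℝ) :
    τ (deriv (fun r => exp (((2 * Real.pi : ℝ) * Complex.I) • a r)) t *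
        exp (-(((2 * Real.pi : ℝ) * Complex.I) • a t))) =
      2 * Real.pi * Complex.I * τ (a' t) := by
  simpa using trace_deriv_exp_comp_mul_exp_neg (τ.restrictScalars ℝ) hτ
    ((hd t).const_smul (((2 * Real.pi : ℝ) : ℂ) * Complex.I))

/-- for a continuous trace `τ` on a complex unital Banach algebra and a
continuously differentiable path `a`, with `u(t) = exp(2πi a(t))` one has
`τ(u'(t) u(t)⁻¹) = 2πi τ(a'(t))` (the inverse of `u(t)` being `exp(−2πi a(t))`). -/
theorem trace_log_deriv_exp {A : Type*} [NormedRing A] [NormedAlgebra ℂ A]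
    [CompleteSpace A] (τ : A →L[ℂ] ℂ) (hτ : ∀ x y : A, τ (x * y) = τ (y * x))
    (a a' : ℝ → A) (hd : ∀ t, HasDerivAt a (a' t) t) (hc : Continuous a') (t : ℝ) :
    τ (deriv (fun r => exp (((2 * Real.pi : ℝ) * Complex.I) • a r)) t *
        exp (-(((2 * Real.pi : ℝ) * Complex.I) • a t))) =
      2 * Real.pi * Complex.I * τ (a' t) :=
  trace_log_deriv_exp_general τ hτ a a' hd t
end

section
/- Let A be a complex unital Banach algebra with a continuous trace τ, and let u : [0,1] × [0,1] → A be a C² family of invertible elements, (s,t) ↦ u_s(t). Then ∂_s τ((∂_t u_s(t)) u_s(t)^{−1}) = ∂_t τ((∂_s u_s(t)) u_s(t)^{−1}) for all (s,t). -/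
/-!
Differentiating, the left side is `τ(∂_s∂_t u · u⁻¹) − τ(∂_t u · u⁻¹ · ∂_s u · u⁻¹)` and the right
side is the same expression with `s` and `t` exchanged. The second derivatives agree because the
second derivative of a `C²` map is symmetric, and the quadratic terms agree by cyclicity of `τ`.
-/

section RingInverse

variable {𝕜 R : Type*} [NontriviallyNormedField 𝕜] [NormedRing R] [NormedAlgebra 𝕜 R]
  [HasSummableGeomSeries R]

theorem HasDerivAt.ringInverse {g : 𝕜 → R} {g' : R} {x : 𝕜} (hg : HasDerivAt g g' x)
    (hx : IsUnit (g x)) :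
    HasDerivAt (fun y => Ring.inverse (g y)) (-(Ring.inverse (g x) * g' * Ring.inverse (g x)))
      x := by
  obtain ⟨u, hu⟩ := hx
  have hinv := hasFDerivAt_ringInverse (𝕜 := 𝕜) u
  rw [hu] at hinv
  simpa [← hu, Function.comp_def] using hinv.comp_hasDerivAt x hg

end RingInverse

section Partial

variable {𝕜 E F : Type*} [NontriviallyNormedField 𝕜] [NormedAddCommGroup E] [NormedSpace 𝕜 E]
  [NormedAddCommGroup F] [NormedSpace 𝕜 F]

theorem DifferentiableAt.hasDerivAt_partial_fst {g : 𝕜 × E → F} {x : 𝕜} {y : E}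
    (hg : DifferentiableAt 𝕜 g (x, y)) :
    HasDerivAt (fun x' => g (x', y)) (fderiv 𝕜 g (x, y) (1, 0)) x :=
  hg.hasFDerivAt.comp_hasDerivAt x ((hasDerivAt_id x).prodMk (hasDerivAt_const x y))

theorem DifferentiableAt.hasDerivAt_partial_snd {g : E × 𝕜 → F} {x : E} {y : 𝕜}
    (hg : DifferentiableAt 𝕜 g (x, y)) :
    HasDerivAt (fun y' => g (x, y')) (fderiv 𝕜 g (x, y) (0, 1)) y :=
  hg.hasFDerivAt.comp_hasDerivAt y ((hasDerivAt_const y x).prodMk (hasDerivAt_id y))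

end Partial

section LogDeriv

variable {E A : Type*} [NormedAddCommGroup E] [NormedSpace ℝ E] [NormedRing A]
  [NormedAlgebra ℝ A]

theorem hasDerivAt_fderiv_mul_ringInverse_comp [HasSummableGeomSeries A] {f : E → A}
    {γ : ℝ → E} {v : E} {r : ℝ} (hf : ContDiffAt ℝ 2 f (γ r)) (hu : IsUnit (f (γ r)))
    (hγ : HasDerivAt γ v r) (d : E) :
    HasDerivAt (fun r' => fderiv ℝ f (γ r') d * Ring.inverse (f (γ r')))
      (fderiv ℝ (fderiv ℝ f) (γ r) v d * Ring.inverse (f (γ r)) -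
        fderiv ℝ f (γ r) d * Ring.inverse (f (γ r)) * fderiv ℝ f (γ r) v *
          Ring.inverse (f (γ r))) r := by
  have hDf : HasDerivAt (fun r' => fderiv ℝ f (γ r') d) (fderiv ℝ (fderiv ℝ f) (γ r) v d) r := by
    have h2 := ((hf.fderiv_right (m := 1) one_add_one_eq_two.le).differentiableAt
      one_ne_zero).hasFDerivAt.comp_hasDerivAt r hγ
    simpa using h2.clm_apply (hasDerivAt_const r d)
  have hinv : HasDerivAt (fun r' => Ring.inverse (f (γ r')))
      (-(Ring.inverse (f (γ r)) * fderiv ℝ f (γ r) v * Ring.inverse (f (γ r)))) r :=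
    ((hf.differentiableAt two_ne_zero).hasFDerivAt.comp_hasDerivAt r hγ).ringInverse hu
  have hprod := hDf.mul hinv
  rw [mul_neg, ← sub_eq_add_neg, ← mul_assoc, ← mul_assoc] at hprod
  exact hprod

theorem IsSymmSndFDerivAt.trace_transgression_symm {M 𝓕 : Type*} [AddCommGroup M]
    [FunLike 𝓕 A M] [AddMonoidHomClass 𝓕 A M] {f : E → A} {p : E} (hf : IsSymmSndFDerivAt ℝ f p)
    (τ : 𝓕) (hτ : ∀ x y, τ (x * y) = τ (y * x)) (w : A) (v d : E) :
    τ (fderiv ℝ (fderiv ℝ f) p v d * w - fderiv ℝ f p d * w * fderiv ℝ f p v * w) =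
      τ (fderiv ℝ (fderiv ℝ f) p d v * w - fderiv ℝ f p v * w * fderiv ℝ f p d * w) := by
  have hcyc : τ (fderiv ℝ f p d * w * fderiv ℝ f p v * w) =
      τ (fderiv ℝ f p v * w * fderiv ℝ f p d * w) := by
    simpa only [mul_assoc] using hτ (fderiv ℝ f p d * w) (fderiv ℝ f p v * w)
  rw [hf v d, map_sub, map_sub, hcyc]

end LogDeriv

/-- transgression symmetry: for a `C²` family of invertibles
`(s,t) ↦ u_s(t)` in a complex unital Banach algebra with continuous trace `τ`,
`∂_s τ((∂_t u)u⁻¹) = ∂_t τ((∂_s u)u⁻¹)`. -/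
theorem transgression_symmetry {A : Type*} [NormedRing A] [NormedAlgebra ℂ A]
    [CompleteSpace A] (τ : A →L[ℂ] ℂ) (hτ : ∀ x y : A, τ (x * y) = τ (y * x))
    (u : ℝ → ℝ → A) (hC2 : ContDiff ℝ 2 (fun p : ℝ × ℝ => u p.1 p.2))
    (hu : ∀ s t, IsUnit (u s t)) (s t : ℝ) :
    deriv (fun s' => τ (deriv (fun t' => u s' t') t * Ring.inverse (u s' t))) s =
      deriv (fun t' => τ (deriv (fun s' => u s' t') s * Ring.inverse (u s t'))) t := by
  set f : ℝ × ℝ → A := fun p => u p.1 p.2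
  have hf (p : ℝ × ℝ) : ContDiffAt ℝ 2 f p := hC2.contDiffAt
  have hf' (p : ℝ × ℝ) : DifferentiableAt ℝ f p := (hf p).differentiableAt two_ne_zero
  have hds (t' : ℝ) : deriv (fun s' => u s' t') s = fderiv ℝ f (s, t') (1, 0) :=
    (hf' (s, t')).hasDerivAt_partial_fst.deriv
  have hdt (s' : ℝ) : deriv (fun t' => u s' t') t = fderiv ℝ f (s', t) (0, 1) :=
    (hf' (s', t)).hasDerivAt_partial_snd.deriv
  simp only [hds, hdt]
  have hs : HasDerivAt (fun s' => τ (fderiv ℝ f (s', t) (0, 1) * Ring.inverse (u s' t))) _ s :=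
    (τ.restrictScalars ℝ).hasFDerivAt.comp_hasDerivAt s
      (hasDerivAt_fderiv_mul_ringInverse_comp (γ := fun s' => (s', t)) (hf (s, t)) (hu s t)
        ((hasDerivAt_id s).prodMk (hasDerivAt_const s t)) (0, 1))
  have ht : HasDerivAt (fun t' => τ (fderiv ℝ f (s, t') (1, 0) * Ring.inverse (u s t'))) _ t :=
    (τ.restrictScalars ℝ).hasFDerivAt.comp_hasDerivAt t
      (hasDerivAt_fderiv_mul_ringInverse_comp (γ := fun t' => (s, t')) (hf (s, t)) (hu s t)
        ((hasDerivAt_const t s).prodMk (hasDerivAt_id t)) (1, 0))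
  rw [hs.deriv, ht.deriv]
  exact ((hf (s, t)).isSymmSndFDerivAt (by simp)).trace_transgression_symm τ hτ _ _ _
end
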